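/- arXiv:1109.1128 — 7 statements merged into one kernel-verified Lean document; each statement's English description precedes it below -/
import Mathlib

section
/- Let R>0 and Γ>0. If h > h₂ := (Γ/(4π))·log(2R), then Ẽ_h(x,y) > 0 for every (x,y) ∈ ℝ² ∖ {(0,2R)}. -/
open Real

/-- `b(x,y) := 2R²·(x² + (y−2R)²)/(4R² + x² + y²)`. -/
noncomputable def bfun (R x y : ℝ) : ℝ :=
  2 * R ^ 2 * (x ^ 2 + (y - 2 * R) ^ 2) / (4 * R ^ 2 + x ^ 2 + y ^ 2)

/-- `Ẽ_h(x,y) := h − (Γ/(8π))·log(b(x,y))`. -/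
noncomputable def Etilde (R Γ h x y : ℝ) : ℝ :=
  h - Γ / (8 * π) * Real.log (bfun R x y)

/-- The gap `(2R)²·(4R² + x² + y²) − 2R²·(x² + (y − 2R)²)` equals `2R²·(x² + (y + 2R)²)`,
so `b` attains its maximum `(2R)²` at `(0, −2R)`. -/
theorem bfun_le_sq (R x y : ℝ) : bfun R x y ≤ (2 * R) ^ 2 :=
  div_le_of_le_mul₀ (by positivity) (by positivity) <| by
    nlinarith [mul_nonneg (sq_nonneg R) (add_nonneg (sq_nonneg x) (sq_nonneg (y + 2 * R)))]

theorem bfun_pos {R x y : ℝ} (hR : R ≠ 0) (hxy : (x, y) ≠ (0, 2 * R)) : 0 < bfun R x y := by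
  have hnum : x ^ 2 + (y - 2 * R) ^ 2 ≠ 0 := by
    intro h
    rw [add_eq_zero_iff_of_nonneg (sq_nonneg _) (sq_nonneg _), sq_eq_zero_iff, sq_eq_zero_iff,
      sub_eq_zero] at h
    exact hxy (Prod.ext h.1 h.2)
  unfold bfun
  positivity

theorem log_bfun_le {R x y : ℝ} (hR : R ≠ 0) (hxy : (x, y) ≠ (0, 2 * R)) :
    Real.log (bfun R x y) ≤ 2 * Real.log (2 * R) := by
  calc Real.log (bfun R x y) ≤ Real.log ((2 * R) ^ 2) :=
        Real.log_le_log (bfun_pos hR hxy) (bfun_le_sq R x y)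
    _ = 2 * Real.log (2 * R) := by rw [Real.log_pow, Nat.cast_ofNat]

theorem sub_le_Etilde {R Γ : ℝ} (h : ℝ) {x y : ℝ} (hR : R ≠ 0) (hΓ : 0 ≤ Γ)
    (hxy : (x, y) ≠ (0, 2 * R)) :
    h - Γ / (4 * π) * Real.log (2 * R) ≤ Etilde R Γ h x y := by
  have hcoef : Γ / (4 * π) = Γ / (8 * π) * 2 := by field_simp; ring
  rw [Etilde, hcoef, mul_assoc]
  gcongr
  exact log_bfun_le hR hxy

/-- if `h > h₂ := (Γ/(4π))·log(2R)` then `Ẽ_h > 0` on `ℝ² ∖ {(0,2R)}`. -/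
theorem Etilde_pos_of_energy_gt (R Γ h : ℝ) (hR : 0 < R) (hΓ : 0 < Γ)
    (hh : h > Γ / (4 * π) * Real.log (2 * R)) :
    ∀ x y : ℝ, (x, y) ≠ ((0 : ℝ), 2 * R) → 0 < Etilde R Γ h x y := fun x y hxy =>
  (sub_pos.mpr hh).trans_le (sub_le_Etilde h hR.ne' hΓ.le hxy)
end

section
/- Let R>0 and Γ>0. For every h < h₁ there exists an open disk D ⊂ {(x,y) ∈ ℝ² : y > 0} containing the point (0,2R), such that Ẽ_h(x,y) > 0 for (x,y) ∈ D ∖ {(0,2R)}, Ẽ_h(x,y) = 0 for (x,y) on the boundary circle of D, and Ẽ_h(x,y) < 0 for every (x,y) outside the closure of D. -/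
open Real

/-!
Write `h = (Γ/8π)·log k`; then `h < h₁` means `0 < k < 2R²`, and away from the vortex (where
`b > 0`) the sign of `Ẽ_h` is that of `k - b`. Clearing the positive denominator, `k - b` has the
sign of `k(4R² + x² + y²) - 2R²(x² + (y - 2R)²)`, a quadratic whose `x²` and `y²` coefficients are
both `k - 2R² < 0`: it is positive exactly inside a circle centred at `(0, c)`,
`c = 4R³/(2R² - k)`, of radius `√(c² - 4R²)`. Since `k > 0` we get `c > 2R`, which puts the vortex
inside the disk and the disk in the upper half-plane.
-/

noncomputable def bfunLevelCenter (R k : ℝ) : ℝ :=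
  4 * R ^ 3 / (2 * R ^ 2 - k)

theorem sub_bfun_eq {R k : ℝ} (hR : R ≠ 0) (hk : k ≠ 2 * R ^ 2) (x y : ℝ) :
    k - bfun R x y = (2 * R ^ 2 - k) *
      (bfunLevelCenter R k ^ 2 - 4 * R ^ 2 - (x ^ 2 + (y - bfunLevelCenter R k) ^ 2)) /
        (4 * R ^ 2 + x ^ 2 + y ^ 2) := by
  have hs : 2 * R ^ 2 - k ≠ 0 := sub_ne_zero.mpr hk.symm
  have hden : 4 * R ^ 2 + x ^ 2 + y ^ 2 ≠ 0 := by positivity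
  unfold bfun bfunLevelCenter
  field_simp
  ring

theorem bfun_lt_iff {R k : ℝ} (hR : R ≠ 0) (hk : k < 2 * R ^ 2) (x y : ℝ) :
    bfun R x y < k ↔
    x ^ 2 + (y - bfunLevelCenter R k) ^ 2 < bfunLevelCenter R k ^ 2 - 4 * R ^ 2 := by
  rw [← sub_pos, sub_bfun_eq hR hk.ne, div_pos_iff_of_pos_right (by positivity),
    mul_pos_iff_of_pos_left (sub_pos.mpr hk), sub_pos]

theorem bfun_eq_iff {R k : ℝ} (hR : R ≠ 0) (hk : k < 2 * R ^ 2) (x y : ℝ) :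
    bfun R x y = k ↔
    x ^ 2 + (y - bfunLevelCenter R k) ^ 2 = bfunLevelCenter R k ^ 2 - 4 * R ^ 2 := by
  rw [eq_comm, ← sub_eq_zero, sub_bfun_eq hR hk.ne, div_eq_zero_iff, mul_eq_zero, sub_eq_zero,
    sub_eq_zero, eq_comm (a := bfunLevelCenter R k ^ 2 - 4 * R ^ 2)]
  have : 4 * R ^ 2 + x ^ 2 + y ^ 2 ≠ 0 := by positivity
  simp [hk.ne', this]

theorem lt_bfun_iff {R k : ℝ} (hR : R ≠ 0) (hk : k < 2 * R ^ 2) (x y : ℝ) :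
    k < bfun R x y ↔
    bfunLevelCenter R k ^ 2 - 4 * R ^ 2 < x ^ 2 + (y - bfunLevelCenter R k) ^ 2 := by
  rw [← not_le, le_iff_lt_or_eq, bfun_lt_iff hR hk, bfun_eq_iff hR hk, ← le_iff_lt_or_eq, not_le]

theorem two_mul_lt_bfunLevelCenter {R k : ℝ} (hR : 0 < R) (hk₀ : 0 < k) (hk : k < 2 * R ^ 2) :
    2 * R < bfunLevelCenter R k := by
  rw [bfunLevelCenter, lt_div_iff₀ (sub_pos.mpr hk)]
  nlinarith

theorem Etilde_log_level (R Γ k x y : ℝ) :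
    Etilde R Γ (Γ / (8 * π) * Real.log k) x y =
      Γ / (8 * π) * (Real.log k - Real.log (bfun R x y)) := by
  rw [Etilde]; ring

theorem exists_eq_mul_log_of_lt_mul_log {a c h : ℝ} (hc : 0 < c) (ha : 0 < a)
    (hh : h < c * Real.log a) : ∃ k, 0 < k ∧ k < a ∧ h = c * Real.log k := by
  refine ⟨Real.exp (h / c), Real.exp_pos _, ?_, by rw [Real.log_exp]; field_simp⟩
  rw [← Real.lt_log_iff_exp_lt ha, div_lt_iff₀' hc]
  exact hh

theorem Etilde_log_level_pos {R Γ k x y : ℝ} (hΓ : 0 < Γ) (hb : 0 < bfun R x y)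
    (hbk : bfun R x y < k) : 0 < Etilde R Γ (Γ / (8 * π) * Real.log k) x y := by
  rw [Etilde_log_level]
  have := Real.log_lt_log hb hbk
  have := Real.pi_pos
  exact mul_pos (by positivity) (by linarith)

theorem Etilde_log_level_neg {R Γ k x y : ℝ} (hΓ : 0 < Γ) (hk : 0 < k)
    (hkb : k < bfun R x y) : Etilde R Γ (Γ / (8 * π) * Real.log k) x y < 0 := by
  rw [Etilde_log_level]
  have := Real.log_lt_log hk hkb
  have := Real.pi_pos
  exact mul_neg_of_pos_of_neg (by positivity) (by linarith)

/-- for `h < h₁ := (Γ/(8π))·log(2R²)` there is an open disk `D` contained in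
the upper half-plane `{y > 0}` and containing the vortex `(0,2R)`, with `Ẽ_h > 0` on
`D ∖ {(0,2R)}`, `Ẽ_h = 0` on its boundary circle and `Ẽ_h < 0` outside its closure. -/
theorem Etilde_sign_of_energy_below (R Γ h : ℝ) (hR : 0 < R) (hΓ : 0 < Γ)
    (hh : h < Γ / (8 * π) * Real.log (2 * R ^ 2)) :
    ∃ c₁ c₂ ρ : ℝ, 0 < ρ ∧
      (∀ x y : ℝ, (x - c₁) ^ 2 + (y - c₂) ^ 2 < ρ ^ 2 → 0 < y) ∧
      ((0 - c₁) ^ 2 + (2 * R - c₂) ^ 2 < ρ ^ 2) ∧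
      (∀ x y : ℝ, (x - c₁) ^ 2 + (y - c₂) ^ 2 < ρ ^ 2 → (x, y) ≠ ((0 : ℝ), 2 * R) →
        0 < Etilde R Γ h x y) ∧
      (∀ x y : ℝ, (x - c₁) ^ 2 + (y - c₂) ^ 2 = ρ ^ 2 → Etilde R Γ h x y = 0) ∧
      (∀ x y : ℝ, ρ ^ 2 < (x - c₁) ^ 2 + (y - c₂) ^ 2 → Etilde R Γ h x y < 0) := by
  obtain ⟨k, hk₀, hk, rfl⟩ :=
    exists_eq_mul_log_of_lt_mul_log (by positivity) (by positivity) hh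
  set c := bfunLevelCenter R k
  have hc : 2 * R < c := two_mul_lt_bfunLevelCenter hR hk₀ hk
  have hρ : √(c ^ 2 - 4 * R ^ 2) ^ 2 = c ^ 2 - 4 * R ^ 2 := Real.sq_sqrt (by nlinarith)
  refine ⟨0, c, √(c ^ 2 - 4 * R ^ 2), Real.sqrt_pos.mpr (by nlinarith), ?_, ?_, ?_, ?_, ?_⟩ <;>
    simp only [hρ, sub_zero]
  · intro x y hxy
    nlinarith [sq_nonneg x]
  · nlinarith
  · intro x y hxy hne
    exact Etilde_log_level_pos hΓ (bfun_pos hR.ne' hne) ((bfun_lt_iff hR.ne' hk x y).mpr hxy)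
  · intro x y hxy
    rw [Etilde_log_level, (bfun_eq_iff hR.ne' hk x y).mpr hxy, sub_self, mul_zero]
  · intro x y hxy
    exact Etilde_log_level_neg hΓ hk₀ ((lt_bfun_iff hR.ne' hk x y).mpr hxy)
end

section
/- Let R>0. Then, uniformly with respect to α ∈ ℝ, r³·e^{−1/r²}·(∂_x b)(φ₁(r)cos α, φ₁(r)sin α + 2R) / b(φ₁(r)cos α, φ₁(r)sin α + 2R) → 0 as r → 0⁺, and likewise with ∂_x b replaced by ∂_y b; hence the time-rescaled McGehee vector field extends continuously by 0 to the collision manifold {r = 0}. -/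
/-!
Write `b = 2R² N / D` with `N = x² + (y - 2R)²` and `D = 4R² + x² + y²`, so that
`∂b / b = ∂N / N - ∂D / D`. At the McGehee point `N = φ₁(r)²`, hence `|∂N / N| ≤ 2 / φ₁(r)`,
while `D ≥ 4R² + t² ≥ 4R |t|` for either coordinate `t` bounds `|∂D / D|` by `1 / (2R)`.
As `r³ e^{-1/r²} = r² φ₁(r)`, the rescaled terms are at most `2r² + r³ / (2R)`, uniformly in `α`.
-/

open Real

noncomputable def phi1 (r : ℝ) : ℝ := r * Real.exp (-1 / r ^ 2)

lemma logDeriv_bfun_fst {R : ℝ} (hR : R ≠ 0) {x y : ℝ} (hN : x ^ 2 + (y - 2 * R) ^ 2 ≠ 0) :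
    logDeriv (fun t => bfun R t y) x =
      2 * x / (x ^ 2 + (y - 2 * R) ^ 2) - 2 * x / (4 * R ^ 2 + x ^ 2 + y ^ 2) := by
  have hD : 4 * R ^ 2 + x ^ 2 + y ^ 2 ≠ 0 := by positivity
  unfold bfun
  rw [logDeriv_div (f := fun t => 2 * R ^ 2 * (t ^ 2 + (y - 2 * R) ^ 2))
      (g := fun t => 4 * R ^ 2 + t ^ 2 + y ^ 2) x (by simp [hR, hN]) hD (by fun_prop) (by fun_prop),
    logDeriv_const_mul (f := fun t => t ^ 2 + (y - 2 * R) ^ 2) x _ (by positivity)]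
  simp [logDeriv_apply]

lemma logDeriv_bfun_snd {R : ℝ} (hR : R ≠ 0) {x y : ℝ} (hN : x ^ 2 + (y - 2 * R) ^ 2 ≠ 0) :
    logDeriv (fun t => bfun R x t) y =
      2 * (y - 2 * R) / (x ^ 2 + (y - 2 * R) ^ 2) - 2 * y / (4 * R ^ 2 + x ^ 2 + y ^ 2) := by
  have hD : 4 * R ^ 2 + x ^ 2 + y ^ 2 ≠ 0 := by positivity
  unfold bfun
  rw [logDeriv_div (f := fun t => 2 * R ^ 2 * (x ^ 2 + (t - 2 * R) ^ 2))
      (g := fun t => 4 * R ^ 2 + x ^ 2 + t ^ 2) y (by simp [hR, hN]) hD (by fun_prop) (by fun_prop),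
    logDeriv_const_mul (f := fun t => x ^ 2 + (t - 2 * R) ^ 2) y _ (by positivity)]
  simp [logDeriv_apply]

lemma abs_two_mul_div_le {R : ℝ} (hR : 0 < R) (a c : ℝ) (hc : 0 ≤ c) :
    |2 * a / (4 * R ^ 2 + a ^ 2 + c)| ≤ 1 / (2 * R) := by
  rw [abs_div, abs_mul, abs_two, abs_of_pos (by positivity : 0 < 4 * R ^ 2 + a ^ 2 + c),
    div_le_div_iff₀ (by positivity) (by positivity)]
  nlinarith [sq_nonneg (|a| - 2 * R), sq_abs a]

lemma abs_two_mul_mul_div_sq_le {ρ u : ℝ} (hρ : 0 < ρ) (hu : |u| ≤ 1) :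
    |2 * (ρ * u) / ρ ^ 2| ≤ 2 / ρ := by
  rw [show 2 * (ρ * u) / ρ ^ 2 = 2 * u / ρ by field_simp, abs_div, abs_mul, abs_two,
    abs_of_pos hρ]
  gcongr
  linarith

lemma abs_logDeriv_bfun_fst_le {R ρ : ℝ} (hR : 0 < R) (hρ : 0 < ρ) (α : ℝ) :
    |logDeriv (fun t => bfun R t (ρ * sin α + 2 * R)) (ρ * cos α)| ≤ 2 / ρ + 1 / (2 * R) := by
  have hN : (ρ * cos α) ^ 2 + (ρ * sin α + 2 * R - 2 * R) ^ 2 = ρ ^ 2 := by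
    linear_combination ρ ^ 2 * cos_sq_add_sin_sq α
  rw [logDeriv_bfun_fst hR.ne' (hN ▸ by positivity), hN]
  exact (abs_sub _ _).trans (add_le_add (abs_two_mul_mul_div_sq_le hρ (abs_cos_le_one α))
    (abs_two_mul_div_le hR _ _ (sq_nonneg _)))

lemma abs_logDeriv_bfun_snd_le {R ρ : ℝ} (hR : 0 < R) (hρ : 0 < ρ) (α : ℝ) :
    |logDeriv (fun t => bfun R (ρ * cos α) t) (ρ * sin α + 2 * R)| ≤ 2 / ρ + 1 / (2 * R) := by
  have hN : (ρ * cos α) ^ 2 + (ρ * sin α + 2 * R - 2 * R) ^ 2 = ρ ^ 2 := by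
    linear_combination ρ ^ 2 * cos_sq_add_sin_sq α
  rw [logDeriv_bfun_snd hR.ne' (hN ▸ by positivity), hN, add_sub_cancel_right, add_right_comm]
  exact (abs_sub _ _).trans (add_le_add (abs_two_mul_mul_div_sq_le hρ (abs_sin_le_one α))
    (abs_two_mul_div_le hR _ _ (sq_nonneg _)))

lemma phi1_pos {r : ℝ} (hr : 0 < r) : 0 < phi1 r := by
  unfold phi1; positivity

lemma phi1_le_self {r : ℝ} (hr : 0 ≤ r) : phi1 r ≤ r :=
  mul_le_of_le_one_right hr <| exp_le_one_iff.mpr <| by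
    rw [neg_div]; exact neg_nonpos.mpr (by positivity)

lemma abs_pow_three_mul_exp_mul_le {R r L : ℝ} (hR : 0 < R) (hr : 0 < r)
    (hL : |L| ≤ 2 / phi1 r + 1 / (2 * R)) :
    |r ^ 3 * exp (-1 / r ^ 2) * L| ≤ 2 * r ^ 2 + r ^ 3 / (2 * R) := by
  have hφ := phi1_pos hr
  calc |r ^ 3 * exp (-1 / r ^ 2) * L| = r ^ 2 * phi1 r * |L| := by
        rw [abs_mul, abs_of_pos (by positivity)]; unfold phi1; ring
    _ ≤ r ^ 2 * phi1 r * (2 / phi1 r + 1 / (2 * R)) := by gcongr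
    _ = 2 * r ^ 2 + r ^ 2 * phi1 r / (2 * R) := by field_simp
    _ ≤ 2 * r ^ 2 + r ^ 3 / (2 * R) := by
        gcongr
        calc r ^ 2 * phi1 r ≤ r ^ 2 * r := by gcongr; exact phi1_le_self hr.le
          _ = r ^ 3 := by ring

/-- uniformly in `α`, as `r → 0⁺`,
`r³·e^{−1/r²}·(∂ₓb)/b → 0` and `r³·e^{−1/r²}·(∂_y b)/b → 0` evaluated at the McGehee
point `(x,y) = (φ₁(r)cos α, φ₁(r)sin α + 2R)`; hence the time-rescaled McGehee vector
field extends continuously by `0` to the collision manifold `{r = 0}`. -/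
theorem rescaled_gradient_term_vanishes_at_collision (R : ℝ) (hR : 0 < R) :
    ∀ ε > (0 : ℝ), ∃ δ > (0 : ℝ), ∀ r : ℝ, 0 < r → r < δ → ∀ α : ℝ,
      |r ^ 3 * Real.exp (-1 / r ^ 2) *
          deriv (fun t => bfun R t (phi1 r * Real.sin α + 2 * R)) (phi1 r * Real.cos α) /
          bfun R (phi1 r * Real.cos α) (phi1 r * Real.sin α + 2 * R)| < ε ∧
      |r ^ 3 * Real.exp (-1 / r ^ 2) *
          deriv (fun t => bfun R (phi1 r * Real.cos α) t) (phi1 r * Real.sin α + 2 * R) /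
          bfun R (phi1 r * Real.cos α) (phi1 r * Real.sin α + 2 * R)| < ε := by
  intro ε hε
  have hbound : Continuous fun r : ℝ => 2 * r ^ 2 + r ^ 3 / (2 * R) := by fun_prop
  obtain ⟨δ, hδ, hsmall⟩ := Metric.continuous_iff.mp hbound 0 ε hε
  refine ⟨δ, hδ, fun r hr hrδ α => ?_⟩
  have hbound_lt : 2 * r ^ 2 + r ^ 3 / (2 * R) < ε := by
    have hpos : 0 < 2 * r ^ 2 + r ^ 3 / (2 * R) := by positivity
    simpa [Real.dist_eq, abs_of_pos hpos]
      using hsmall r (by rwa [Real.dist_eq, sub_zero, abs_of_pos hr])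
  simp only [mul_div_assoc, ← logDeriv_apply]
  exact ⟨(abs_pow_three_mul_exp_mul_le hR hr
      (abs_logDeriv_bfun_fst_le hR (phi1_pos hr) α)).trans_lt hbound_lt,
    (abs_pow_three_mul_exp_mul_le hR hr
      (abs_logDeriv_bfun_snd_le hR (phi1_pos hr) α)).trans_lt hbound_lt⟩
end

section
/- Let Γ>0 and ψ₀ ∈ ℝ, and let α : ℝ → ℝ be differentiable with α'(σ) = (Γ/(4π))·sin(ψ₀ − α(σ)) for all σ and ψ₀ − π < α(0) < ψ₀. Then ψ₀ − π < α(σ) < ψ₀ for all σ ∈ ℝ, α is strictly increasing, lim_{σ→+∞} α(σ) = ψ₀ and lim_{σ→−∞} α(σ) = ψ₀ − π. Hence every non-equilibrium orbit on the total collision manifold is a heteroclinic connection from the equilibrium (ψ₀ − π, ψ₀) ∈ 𝒫₂ to the equilibrium (ψ₀, ψ₀) ∈ 𝒫₁, and the flow on the collision manifold is totally degenerate. -/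
open Real Filter Topology Set

/-! With `θ = ψ₀ - α` the equation reads `θ' = -c sin θ`, and the half-angle substitution
`u = tan (θ / 2)` linearises it to `u' = -c u`. Hence `α σ = ψ₀ - 2 arctan (t e^{-cσ})` with
`t = tan ((ψ₀ - α 0) / 2) > 0`: this explicit orbit is a solution, and it is the only one because
`x ↦ c sin (ψ₀ - x)` is Lipschitz. Its range, monotonicity and limits are read off from `arctan`. -/

theorem Real.sin_two_mul_arctan (x : ℝ) : sin (2 * arctan x) = 2 * x / (1 + x ^ 2) := by
  rw [sin_eq_two_mul_tan_half_div_one_add_tan_half_sq, mul_div_cancel_left₀ _ two_ne_zero,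
    tan_arctan]

lemma lipschitzWith_const_mul_sin_sub (c ψ₀ : ℝ) :
    LipschitzWith ‖c‖₊ (fun x : ℝ => c * sin (ψ₀ - x)) := by
  simpa [Function.comp_def] using (lipschitzWith_smul c).comp
    (lipschitzWith_sin.comp (IsometryEquiv.subLeft ψ₀).isometry.lipschitz)

noncomputable def heteroclinicOrbit (c ψ₀ t : ℝ) : ℝ → ℝ :=
  fun σ => ψ₀ - 2 * arctan (t * exp (-(c * σ)))

section
variable {c ψ₀ t : ℝ}

lemma hasDerivAt_heteroclinicOrbit (σ : ℝ) :
    HasDerivAt (heteroclinicOrbit c ψ₀ t) (c * sin (ψ₀ - heteroclinicOrbit c ψ₀ t σ)) σ := by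
  set u := t * exp (-(c * σ))
  have hu : HasDerivAt (fun σ => t * exp (-(c * σ))) (-c * u) σ :=
    ((((hasDerivAt_id σ).const_mul c).neg.exp).const_mul t).congr_deriv
      (by simp only [u, Pi.neg_apply, id]; ring)
  refine ((((hasDerivAt_arctan u).comp σ hu).const_mul 2).const_sub ψ₀).congr_deriv ?_
  rw [heteroclinicOrbit, sub_sub_cancel, sin_two_mul_arctan]
  field_simp
  ring

lemma heteroclinicOrbit_zero_tan_half {a : ℝ} (h₁ : ψ₀ - π < a) (h₂ : a < ψ₀) :
    heteroclinicOrbit c ψ₀ (tan ((ψ₀ - a) / 2)) 0 = a := by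
  rw [heteroclinicOrbit, mul_zero, neg_zero, exp_zero, mul_one,
    arctan_tan (by linarith [pi_pos]) (by linarith)]
  ring

lemma heteroclinicOrbit_mem_Ioo (ht : 0 < t) (σ : ℝ) :
    heteroclinicOrbit c ψ₀ t σ ∈ Ioo (ψ₀ - π) ψ₀ := by
  have hpos : 0 < arctan (t * exp (-(c * σ))) := arctan_pos.2 (by positivity)
  have hlt := arctan_lt_pi_div_two (t * exp (-(c * σ)))
  constructor <;> simp only [heteroclinicOrbit] <;> linarith

lemma strictMono_heteroclinicOrbit (hc : 0 < c) (ht : 0 < t) :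
    StrictMono (heteroclinicOrbit c ψ₀ t) := by
  intro σ τ hστ
  have : t * exp (-(c * τ)) < t * exp (-(c * σ)) := by gcongr
  simp only [heteroclinicOrbit]
  linarith [arctan_strictMono this]

lemma tendsto_heteroclinicOrbit_atTop (hc : 0 < c) :
    Tendsto (heteroclinicOrbit c ψ₀ t) atTop (𝓝 ψ₀) := by
  unfold heteroclinicOrbit
  have hexp : Tendsto (fun σ => t * exp (-(c * σ))) atTop (𝓝 0) := by
    simpa using (tendsto_exp_atBot.comp
      (tendsto_neg_atTop_atBot.comp (tendsto_id.const_mul_atTop hc))).const_mul t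
  simpa using ((continuous_arctan.tendsto 0).comp hexp |>.const_mul 2).const_sub ψ₀

lemma tendsto_heteroclinicOrbit_atBot (hc : 0 < c) (ht : 0 < t) :
    Tendsto (heteroclinicOrbit c ψ₀ t) atBot (𝓝 (ψ₀ - π)) := by
  have hexp : Tendsto (fun σ => t * exp (-(c * σ))) atBot atTop :=
    (tendsto_exp_atTop.comp
      (tendsto_neg_atBot_atTop.comp (tendsto_id.const_mul_atBot hc))).const_mul_atTop ht
  have := ((tendsto_nhds_of_tendsto_nhdsWithin tendsto_arctan_atTop).comp hexp
    |>.const_mul 2).const_sub ψ₀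
  rwa [mul_div_cancel₀ _ two_ne_zero] at this

lemma eq_heteroclinicOrbit {α : ℝ → ℝ} (hα : ∀ σ, HasDerivAt α (c * sin (ψ₀ - α σ)) σ)
    (h₁ : ψ₀ - π < α 0) (h₂ : α 0 < ψ₀) :
    α = heteroclinicOrbit c ψ₀ (tan ((ψ₀ - α 0) / 2)) :=
  ODE_solution_unique_univ (v := fun _ x => c * sin (ψ₀ - x)) (s := fun _ => univ) (t₀ := 0)
    (fun _ => (lipschitzWith_const_mul_sin_sub c ψ₀).lipschitzOnWith)
    (fun σ => ⟨hα σ, trivial⟩) (fun σ => ⟨hasDerivAt_heteroclinicOrbit σ, trivial⟩)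
    (heteroclinicOrbit_zero_tan_half h₁ h₂).symm

end

/-- on the collision manifold, with `ψ ≡ ψ₀` constant, any solution of
`α' = (Γ/(4π))·sin(ψ₀ − α)` with `ψ₀ − π < α(0) < ψ₀` stays in `(ψ₀ − π, ψ₀)` for all
times, is strictly increasing, tends to `ψ₀` as `σ → +∞` and to `ψ₀ − π` as `σ → −∞`.
Hence every non-equilibrium orbit on the total collision manifold is a heteroclinic
connection from the equilibrium `(ψ₀ − π, ψ₀) ∈ 𝒫₂` to `(ψ₀, ψ₀) ∈ 𝒫₁`, and the flow on
the collision manifold is totally degenerate. -/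
theorem collision_manifold_heteroclinic (Γ ψ₀ : ℝ) (hΓ : 0 < Γ) (α : ℝ → ℝ)
    (hα : Differentiable ℝ α)
    (hode : ∀ σ : ℝ, deriv α σ = Γ / (4 * π) * Real.sin (ψ₀ - α σ))
    (h0 : ψ₀ - π < α 0) (h0' : α 0 < ψ₀) :
    (∀ σ : ℝ, ψ₀ - π < α σ ∧ α σ < ψ₀) ∧
    StrictMono α ∧
    Tendsto α atTop (nhds ψ₀) ∧
    Tendsto α atBot (nhds (ψ₀ - π)) := by
  have hc : 0 < Γ / (4 * π) := by positivity
  have ht : 0 < tan ((ψ₀ - α 0) / 2) := tan_pos_of_pos_of_lt_pi_div_two (by linarith) (by linarith)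
  have hsol : ∀ σ, HasDerivAt α (Γ / (4 * π) * sin (ψ₀ - α σ)) σ := fun σ =>
    hode σ ▸ (hα σ).hasDerivAt
  rw [eq_heteroclinicOrbit hsol h0 h0']
  exact ⟨heteroclinicOrbit_mem_Ioo ht, strictMono_heteroclinicOrbit hc ht,
    tendsto_heteroclinicOrbit_atTop hc, tendsto_heteroclinicOrbit_atBot hc ht⟩
end

section
/- Let R>0 and Γ>0. Then Ẽ_h(0,−2R) = 0 if and only if h = h₂ := (Γ/(4π))·log(2R). Moreover the function φ₁(r) := r·e^{−1/r²} is a strictly increasing bijection from (0,∞) onto (0,∞), so there is a unique r* > 0 with φ₁(r*) = 4R, and the point (0,−2R) is exactly the image of the McGehee point (r*, 3π/2), i.e. (0,−2R) = (φ₁(r*)·cos(3π/2), φ₁(r*)·sin(3π/2) + 2R). Hence for h = h₂ there is exactly one restpoint on the zero velocity manifold, located at (r*, 3π/2), and for h ≠ h₂ there are none. -/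
open Real

/-! Since `b(0, -2R) = (2R)²`, the level `Ẽ_h = 0` passes through `(0, -2R)` exactly when
`h = (Γ/(4π)) log(2R)`. The gradient of `b` is a nonzero multiple of `(2xy, y² - x² - 4R²)`,
so it vanishes only at `(0, ±2R)`, and `(0, 2R)` is the excluded singularity.
Both factors of `φ₁` increase on `(0, ∞)`; since `r/e ≤ φ₁(r)` for `r ≥ 1` and `φ₁(r) ≤ r`,
the intermediate value theorem makes `φ₁` onto `(0, ∞)`. -/

section Bfun

variable {R : ℝ}

lemma deriv_bfun_fst (hR : R ≠ 0) (x y : ℝ) :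
    deriv (fun t => bfun R t y) x = 16 * R ^ 3 * x * y / (4 * R ^ 2 + x ^ 2 + y ^ 2) ^ 2 := by
  have hsq : HasDerivAt (fun t : ℝ => t ^ 2) (2 * x) x := by simpa using hasDerivAt_pow 2 x
  have hnum : HasDerivAt (fun t : ℝ => 2 * R ^ 2 * (t ^ 2 + (y - 2 * R) ^ 2)) (2 * R ^ 2 * (2 * x)) x :=
    (hsq.add_const _).const_mul _
  have hden : HasDerivAt (fun t : ℝ => 4 * R ^ 2 + t ^ 2 + y ^ 2) (2 * x) x := by
    simpa using (hsq.const_add (4 * R ^ 2)).add_const (y ^ 2)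
  have hb : HasDerivAt (fun t => bfun R t y) _ x := hnum.div hden (by positivity)
  rw [hb.deriv, div_eq_div_iff (by positivity) (by positivity)]
  ring

lemma deriv_bfun_snd (hR : R ≠ 0) (x y : ℝ) :
    deriv (fun t => bfun R x t) y =
      8 * R ^ 3 * (y ^ 2 - x ^ 2 - 4 * R ^ 2) / (4 * R ^ 2 + x ^ 2 + y ^ 2) ^ 2 := by
  have hsq : HasDerivAt (fun t : ℝ => t ^ 2) (2 * y) y := by simpa using hasDerivAt_pow 2 y
  have hshift : HasDerivAt (fun t : ℝ => (t - 2 * R) ^ 2) (2 * (y - 2 * R)) y := by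
    simpa [Pi.pow_def] using ((hasDerivAt_id y).sub_const (2 * R)).pow 2
  have hnum : HasDerivAt (fun t : ℝ => 2 * R ^ 2 * (x ^ 2 + (t - 2 * R) ^ 2))
      (2 * R ^ 2 * (2 * (y - 2 * R))) y :=
    (hshift.const_add _).const_mul _
  have hden : HasDerivAt (fun t : ℝ => 4 * R ^ 2 + x ^ 2 + t ^ 2) (2 * y) y :=
    hsq.const_add _
  have hb : HasDerivAt (fun t => bfun R x t) _ y := hnum.div hden (by positivity)
  rw [hb.deriv, div_eq_div_iff (by positivity) (by positivity)]
  ring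

lemma bfun_critical_iff (hR : R ≠ 0) (x y : ℝ) :
    (deriv (fun t => bfun R t y) x = 0 ∧ deriv (fun t => bfun R x t) y = 0) ↔
      x = 0 ∧ (y = 2 * R ∨ y = -(2 * R)) := by
  have hR3 : R ^ 3 ≠ 0 := pow_ne_zero 3 hR
  have hD : (4 * R ^ 2 + x ^ 2 + y ^ 2) ^ 2 ≠ 0 := by positivity
  simp only [deriv_bfun_fst hR, deriv_bfun_snd hR, div_eq_zero_iff, hD, or_false,
    mul_eq_zero, hR3, OfNat.ofNat_ne_zero, false_or]
  constructor
  · rintro ⟨hx | hy, hcirc⟩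
    · subst hx
      have : (y - 2 * R) * (y + 2 * R) = 0 := by linear_combination hcirc
      refine ⟨rfl, ?_⟩
      rcases mul_eq_zero.1 this with h | h
      · exact Or.inl (by linarith)
      · exact Or.inr (by linarith)
    · subst hy
      have : 0 < x ^ 2 + 4 * R ^ 2 := by positivity
      exact absurd hcirc (by linarith)
  · rintro ⟨rfl, rfl | rfl⟩ <;> exact ⟨Or.inl rfl, by ring⟩

lemma bfun_zero_neg (hR : R ≠ 0) : bfun R 0 (-(2 * R)) = (2 * R) ^ 2 := by
  rw [bfun, div_eq_iff (by positivity)]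
  ring

lemma Etilde_zero_neg_eq_zero_iff (hR : R ≠ 0) (Γ h : ℝ) :
    Etilde R Γ h 0 (-(2 * R)) = 0 ↔ h = Γ / (4 * π) * Real.log (2 * R) := by
  have h8π : Γ / (8 * π) * (2 * Real.log (2 * R)) = Γ / (4 * π) * Real.log (2 * R) := by
    field_simp [pi_ne_zero]
    ring
  rw [Etilde, bfun_zero_neg hR, Real.log_pow, Nat.cast_ofNat, h8π, sub_eq_zero]

end Bfun

section Phi1

lemma strictMonoOn_phi1 : StrictMonoOn phi1 (Set.Ioi 0) := by
  intro a (ha : 0 < a) b (hb : 0 < b) hab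
  have hexp : -1 / a ^ 2 < -1 / b ^ 2 := by
    rw [neg_div, neg_div, neg_lt_neg_iff]
    exact one_div_lt_one_div_of_lt (by positivity) (pow_lt_pow_left₀ hab ha.le two_ne_zero)
  calc a * exp (-1 / a ^ 2) < b * exp (-1 / a ^ 2) := mul_lt_mul_of_pos_right hab (exp_pos _)
    _ < b * exp (-1 / b ^ 2) := mul_lt_mul_of_pos_left (exp_lt_exp.2 hexp) hb

lemma continuousOn_phi1 : ContinuousOn phi1 (Set.Ioi 0) := by
  unfold phi1
  fun_prop (disch := intro r hr; exact pow_ne_zero 2 (ne_of_gt hr))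

lemma mul_exp_neg_one_le_phi1 {r : ℝ} (hr : 1 ≤ r) : r * exp (-1) ≤ phi1 r := by
  have hr2 : 1 / r ^ 2 ≤ 1 := by
    rw [div_le_one (by positivity)]
    exact one_le_pow₀ hr
  refine mul_le_mul_of_nonneg_left (exp_le_exp.2 ?_) (by linarith)
  rw [neg_div]
  linarith

lemma surjOn_phi1 : Set.SurjOn phi1 (Set.Ioi 0) (Set.Ioi 0) := by
  intro v (hv : 0 < v)
  set b := max 1 (exp 1 * v)
  have hvb : v ≤ b := le_max_of_le_right (le_mul_of_one_le_left hv.le (one_le_exp zero_le_one))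
  have hlow : phi1 v ≤ v := phi1_le_self hv.le
  have hhigh : v ≤ phi1 b :=
    calc v = exp 1 * v * exp (-1) := by rw [mul_right_comm, ← exp_add]; simp
      _ ≤ b * exp (-1) := mul_le_mul_of_nonneg_right (le_max_right _ _) (exp_pos _).le
      _ ≤ phi1 b := mul_exp_neg_one_le_phi1 (le_max_left _ _)
  obtain ⟨r, hr, hrv⟩ := intermediate_value_Icc hvb
    (continuousOn_phi1.mono fun r hr => lt_of_lt_of_le hv hr.1) ⟨hlow, hhigh⟩
  exact ⟨r, lt_of_lt_of_le hv hr.1, hrv⟩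

lemma bijOn_phi1 : Set.BijOn phi1 (Set.Ioi 0) (Set.Ioi 0) :=
  ⟨fun _ hr => phi1_pos hr, strictMonoOn_phi1.injOn, surjOn_phi1⟩

lemma existsUnique_pos_phi1_eq {v : ℝ} (hv : 0 < v) : ∃! r : ℝ, 0 < r ∧ phi1 r = v := by
  obtain ⟨r, hr, hrv⟩ := surjOn_phi1 (Set.mem_Ioi.2 hv)
  exact ⟨r, ⟨hr, hrv⟩, fun s ⟨hs, hsv⟩ => strictMonoOn_phi1.injOn hs hr (hsv.trans hrv.symm)⟩

end Phi1

lemma zero_neg_eq_mcGehee_three_pi_div_two (R ρ : ℝ) (hρ : ρ = 4 * R) :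
    ((0 : ℝ), -(2 * R)) = (ρ * cos (3 * π / 2), ρ * sin (3 * π / 2) + 2 * R) := by
  rw [show 3 * π / 2 = π / 2 + π by ring, cos_add_pi, sin_add_pi, cos_pi_div_two,
    sin_pi_div_two, hρ, Prod.mk.injEq]
  constructor <;> ring

theorem restpoint_on_zero_velocity_manifold_general (R Γ : ℝ) (hR : 0 < R) :
    (∀ h : ℝ, Etilde R Γ h 0 (-(2 * R)) = 0 ↔ h = Γ / (4 * π) * Real.log (2 * R)) ∧
    StrictMonoOn phi1 (Set.Ioi 0) ∧
    Set.BijOn phi1 (Set.Ioi 0) (Set.Ioi 0) ∧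
    (∃! r : ℝ, 0 < r ∧ phi1 r = 4 * R) ∧
    (∀ r : ℝ, 0 < r → phi1 r = 4 * R →
      ((0 : ℝ), -(2 * R)) =
        (phi1 r * Real.cos (3 * π / 2), phi1 r * Real.sin (3 * π / 2) + 2 * R)) ∧
    (∀ h x y : ℝ, (x, y) ≠ ((0 : ℝ), 2 * R) →
      ((Etilde R Γ h x y = 0 ∧ deriv (fun t => bfun R t y) x = 0 ∧
          deriv (fun t => bfun R x t) y = 0) ↔
        (h = Γ / (4 * π) * Real.log (2 * R) ∧ (x, y) = ((0 : ℝ), -(2 * R))))) := by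
  refine ⟨Etilde_zero_neg_eq_zero_iff hR.ne' Γ, strictMonoOn_phi1, bijOn_phi1,
    existsUnique_pos_phi1_eq (by positivity), fun r _ hr => zero_neg_eq_mcGehee_three_pi_div_two R _ hr,
    fun h x y hne => ?_⟩
  rw [bfun_critical_iff hR.ne', Prod.mk.injEq]
  constructor
  · rintro ⟨hE, rfl, rfl | rfl⟩
    · exact absurd rfl hne
    · exact ⟨(Etilde_zero_neg_eq_zero_iff hR.ne' Γ h).1 hE, rfl, rfl⟩
  · rintro ⟨hh, rfl, rfl⟩
    exact ⟨(Etilde_zero_neg_eq_zero_iff hR.ne' Γ h).2 hh, rfl, Or.inr rfl⟩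

/-- `Ẽ_h(0,−2R) = 0` iff `h = h₂ := (Γ/(4π))·log(2R)`; `φ₁` is a strictly
increasing bijection of `(0,∞)` onto itself, so there is a unique `r* > 0` with
`φ₁(r*) = 4R`, and `(0,−2R)` is the image of the McGehee point `(r*, 3π/2)`. Hence
(restpoints on the zero velocity manifold being the points of `ℝ² ∖ {(0,2R)}` where
`Ẽ_h = 0` and the gradient of `b` vanishes) for `h = h₂` there is exactly one restpoint
on the zero velocity manifold, located at `(r*, 3π/2)`, and for `h ≠ h₂` there are
none. -/
theorem restpoint_on_zero_velocity_manifold (R Γ : ℝ) (hR : 0 < R) (hΓ : 0 < Γ) :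
    (∀ h : ℝ, Etilde R Γ h 0 (-(2 * R)) = 0 ↔ h = Γ / (4 * π) * Real.log (2 * R)) ∧
    StrictMonoOn phi1 (Set.Ioi 0) ∧
    Set.BijOn phi1 (Set.Ioi 0) (Set.Ioi 0) ∧
    (∃! r : ℝ, 0 < r ∧ phi1 r = 4 * R) ∧
    (∀ r : ℝ, 0 < r → phi1 r = 4 * R →
      ((0 : ℝ), -(2 * R)) =
        (phi1 r * Real.cos (3 * π / 2), phi1 r * Real.sin (3 * π / 2) + 2 * R)) ∧
    (∀ h x y : ℝ, (x, y) ≠ ((0 : ℝ), 2 * R) →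
      ((Etilde R Γ h x y = 0 ∧ deriv (fun t => bfun R t y) x = 0 ∧
          deriv (fun t => bfun R x t) y = 0) ↔
        (h = Γ / (4 * π) * Real.log (2 * R) ∧ (x, y) = ((0 : ℝ), -(2 * R))))) :=
  restpoint_on_zero_velocity_manifold_general R Γ hR
end

section
/- Let R>0, Γ>0, let I ⊂ ℝ be an interval and let θ : I → (0,π), φ : I → ℝ be differentiable functions such that for some constants l, h ∈ ℝ and all t ∈ I: l = R²·sin²θ(t)·φ'(t) (conservation of the spherical angular momentum) and h = (R²/2)·(θ'(t)² + sin²θ(t)·φ'(t)²) + (Γ/(8π))·log(2R²·(1+cos θ(t))) (conservation of energy). If there is a sequence (t_n) in I with θ(t_n) → π (collision with the vortex) or θ(t_n) → 0 (reaching the antipodal point), then l = 0. -/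
open Real Filter

/-!
Energy conservation gives `l² ≤ 2R² sin²θ (h - (Γ/8π) log(2R²(1 + cos θ)))`, the defect being
`(R² sin θ θ')²`. Writing `sin²θ = (1 - cos θ)(1 + cos θ)` and using `y log y → 0`, the right-hand
side is a continuous function of `θ` on all of `ℝ` vanishing at `θ = 0` and `θ = π`; along the
sequence it therefore tends to `0`, forcing `l² ≤ 0`.
-/

lemma continuous_mul_log_const_mul (k : ℝ) : Continuous fun x : ℝ => x * log (k * x) := by
  rcases eq_or_ne k 0 with rfl | hk
  · simpa using continuous_const
  have hsplit : (fun x : ℝ => x * log (k * x)) = fun x => x * log k + x * log x := by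
    funext x
    rcases eq_or_ne x 0 with rfl | hx
    · simp
    · rw [log_mul hk hx]
      ring
  rw [hsplit]
  exact (continuous_id.mul continuous_const).add continuous_mul_log

lemma continuous_sin_sq_mul_log_one_add_cos (a : ℝ) :
    Continuous fun x : ℝ => sin x ^ 2 * log (a * (1 + cos x)) := by
  have hfactor : (fun x : ℝ => sin x ^ 2 * log (a * (1 + cos x))) =
      fun x => (1 - cos x) * ((1 + cos x) * log (a * (1 + cos x))) := by
    funext x
    rw [sin_sq]
    ring
  rw [hfactor]
  exact (continuous_const.sub continuous_cos).mul
    ((continuous_mul_log_const_mul a).comp (continuous_const.add continuous_cos))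

lemma tendsto_sin_sq_mul_sub_log_one_add_cos {α : Type*} {F : Filter α} {x : α → ℝ}
    (h C a : ℝ) (hx : Tendsto x F (nhds π) ∨ Tendsto x F (nhds 0)) :
    Tendsto (fun t => sin (x t) ^ 2 * (h - C * log (a * (1 + cos (x t))))) F (nhds 0) := by
  have hcont : Continuous fun y : ℝ => sin y ^ 2 * (h - C * log (a * (1 + cos y))) := by
    refine (((continuous_sin.pow 2).mul (continuous_const (y := h))).sub
      ((continuous_sin_sq_mul_log_one_add_cos a).const_mul C)).congr fun y => by
      simp only [Pi.sub_apply, Pi.mul_apply, Pi.pow_apply]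
      ring
  rcases hx with hx | hx
  · simpa [Function.comp_def] using (hcont.tendsto π).comp hx
  · simpa [Function.comp_def] using (hcont.tendsto 0).comp hx

lemma sq_angularMomentum_le_of_energy {R s l h V θd φd : ℝ} (hl : l = R ^ 2 * s ^ 2 * φd)
    (hh : h = R ^ 2 / 2 * (θd ^ 2 + s ^ 2 * φd ^ 2) + V) :
    l ^ 2 ≤ 2 * R ^ 2 * (s ^ 2 * (h - V)) := by
  have hdefect : 2 * R ^ 2 * (s ^ 2 * (h - V)) = l ^ 2 + (R ^ 2 * s * θd) ^ 2 := by
    subst hl hh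
    ring
  rw [hdefect]
  exact le_add_of_nonneg_right (sq_nonneg _)

theorem angular_momentum_vanishes_at_collision_general (R Γ l h : ℝ)
    (I : Set ℝ)
    (θ θd φd : ℝ → ℝ)
    (hl : ∀ t ∈ I, l = R ^ 2 * Real.sin (θ t) ^ 2 * φd t)
    (hh : ∀ t ∈ I, h = R ^ 2 / 2 * (θd t ^ 2 + Real.sin (θ t) ^ 2 * φd t ^ 2) +
      Γ / (8 * π) * Real.log (2 * R ^ 2 * (1 + Real.cos (θ t))))
    (u : ℕ → ℝ) (hu : ∀ n, u n ∈ I)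
    (hlim : Tendsto (fun n => θ (u n)) atTop (nhds π) ∨
      Tendsto (fun n => θ (u n)) atTop (nhds 0)) :
    l = 0 := by
  have hbound : ∀ n, l ^ 2 ≤ 2 * R ^ 2 * (sin (θ (u n)) ^ 2 *
      (h - Γ / (8 * π) * log (2 * R ^ 2 * (1 + cos (θ (u n)))))) := fun n =>
    sq_angularMomentum_le_of_energy (hl _ (hu n)) (hh _ (hu n))
  have hbound_tendsto := (tendsto_sin_sq_mul_sub_log_one_add_cos h (Γ / (8 * π))
    (2 * R ^ 2) hlim).const_mul (2 * R ^ 2)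
  rw [mul_zero] at hbound_tendsto
  have hsq : l ^ 2 ≤ 0 := ge_of_tendsto' hbound_tendsto hbound
  exact pow_eq_zero_iff two_ne_zero |>.1 (le_antisymm hsq (sq_nonneg l))

/-- if along a solution on the sphere (with conserved spherical angular
momentum `l = R²·sin²θ·φ'` and conserved energy
`h = (R²/2)(θ'² + sin²θ·φ'²) + (Γ/(8π))·log(2R²(1+cos θ))`) there is a sequence of times
along which the colatitude `θ` tends to `π` (collision with the vortex) or to `0`
(antipodal point), then necessarily `l = 0`. -/
theorem angular_momentum_vanishes_at_collision (R Γ l h : ℝ) (hR : 0 < R) (hΓ : 0 < Γ)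
    (I : Set ℝ) (hI : I.OrdConnected)
    (θ φ θd φd : ℝ → ℝ)
    (hrange : ∀ t ∈ I, θ t ∈ Set.Ioo 0 π)
    (hθ : ∀ t ∈ I, HasDerivAt θ (θd t) t)
    (hφ : ∀ t ∈ I, HasDerivAt φ (φd t) t)
    (hl : ∀ t ∈ I, l = R ^ 2 * Real.sin (θ t) ^ 2 * φd t)
    (hh : ∀ t ∈ I, h = R ^ 2 / 2 * (θd t ^ 2 + Real.sin (θ t) ^ 2 * φd t ^ 2) +
      Γ / (8 * π) * Real.log (2 * R ^ 2 * (1 + Real.cos (θ t))))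
    (u : ℕ → ℝ) (hu : ∀ n, u n ∈ I)
    (hlim : Tendsto (fun n => θ (u n)) atTop (nhds π) ∨
      Tendsto (fun n => θ (u n)) atTop (nhds 0)) :
    l = 0 :=
  angular_momentum_vanishes_at_collision_general R Γ l h I θ θd φd hl hh u hu hlim
end

section
/- Let R>0, Γ>0 and fix θ̄ ∈ (π/2, π). Set p̄ ∈ ℝ with p̄² = −(Γ/(8π))·sin⁴θ̄/(2·cos θ̄·(1+cos θ̄)) (the right-hand side is positive since cos θ̄ < 0). Then for any φ₀ ∈ ℝ the curve γ(t) = (φ(t), θ(t), p_φ(t), p_θ(t)) := (φ₀ + t·p̄/(R²·sin²θ̄), θ̄, p̄, 0) is a solution of the system φ' = p_φ/(R²·sin²θ), θ' = p_θ/R², p_φ' = 0, p_θ' = (cos θ/(R²·sin³θ))·p_φ² + (Γ/(8π))·sin θ/(2R²·(1+cos θ)); hence every vortex-parallel in the vortex half-sphere supports a periodic orbit. Conversely, for θ̄ ∈ (0, π/2] no real p̄ ≠ 0 satisfies (cos θ̄/sin³θ̄)·p̄² + (Γ/(8π))·sin θ̄/(2·(1+cos θ̄)) = 0, so no vortex-parallel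 in the antivortex half-sphere supports such an orbit. -/
open Real

/-!
Along a parallel `θ = θ̄` with `p_θ = 0` the equations for `φ`, `θ` and `p_φ` hold trivially,
and the one for `p_θ` says that the force `(cos θ / sin³ θ) p² + (Γ/8π) sin θ / (2 (1 + cos θ))`,
which is `R²` times the right-hand side of `p_θ'`, vanishes. This pins down `p̄²`, and the value
is admissible exactly when `cos θ̄ < 0`: on the antivortex half-sphere both terms of the force are
nonnegative and the second one is positive.
-/

noncomputable def vortexForce (Γ θ p : ℝ) : ℝ :=
  cos θ / sin θ ^ 3 * p ^ 2 + Γ / (8 * π) * sin θ / (2 * (1 + cos θ))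

theorem vortexForce_div_sq (R Γ θ p : ℝ) :
    cos θ / (R ^ 2 * sin θ ^ 3) * p ^ 2 + Γ / (8 * π) * sin θ / (2 * R ^ 2 * (1 + cos θ)) =
      vortexForce Γ θ p / R ^ 2 := by
  simp only [vortexForce, div_eq_mul_inv, mul_inv]
  ring

theorem vortexForce_eq_zero_of_sq_eq {Γ θ p : ℝ} (hcos : cos θ ≠ 0)
    (hp : p ^ 2 = -(Γ / (8 * π)) * sin θ ^ 4 / (2 * cos θ * (1 + cos θ))) :
    vortexForce Γ θ p = 0 := by
  unfold vortexForce
  rw [hp]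
  field_simp
  ring

theorem vortexForce_pos {Γ θ : ℝ} (hΓ : 0 < Γ) (hθ : θ ∈ Set.Ioc 0 (π / 2)) (p : ℝ) :
    0 < vortexForce Γ θ p := by
  obtain ⟨hθ0, hθ2⟩ := hθ
  have hsin : 0 < sin θ := sin_pos_of_pos_of_lt_pi hθ0 (by linarith [pi_pos])
  have hcos : 0 ≤ cos θ := cos_nonneg_of_mem_Icc ⟨by linarith, hθ2⟩
  unfold vortexForce
  positivity

theorem vortex_parallel_periodic_orbits_general (R Γ θb pb φ₀ : ℝ) (hΓ : 0 < Γ)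
    (hθb : θb ∈ Set.Ioo (π / 2) π)
    (hpb : pb ^ 2 =
      -(Γ / (8 * π)) * Real.sin θb ^ 4 / (2 * Real.cos θb * (1 + Real.cos θb))) :
    (∀ t : ℝ,
      HasDerivAt (fun s => φ₀ + s * pb / (R ^ 2 * Real.sin θb ^ 2))
        (pb / (R ^ 2 * Real.sin θb ^ 2)) t ∧
      HasDerivAt (fun _ : ℝ => θb) ((0 : ℝ) / R ^ 2) t ∧
      HasDerivAt (fun _ : ℝ => pb) 0 t ∧
      HasDerivAt (fun _ : ℝ => (0 : ℝ))
        (Real.cos θb / (R ^ 2 * Real.sin θb ^ 3) * pb ^ 2 +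
          Γ / (8 * π) * Real.sin θb / (2 * R ^ 2 * (1 + Real.cos θb))) t) ∧
    (∀ θ p : ℝ, θ ∈ Set.Ioc 0 (π / 2) → p ≠ 0 →
      Real.cos θ / Real.sin θ ^ 3 * p ^ 2 +
        Γ / (8 * π) * Real.sin θ / (2 * (1 + Real.cos θ)) ≠ 0) := by
  obtain ⟨hlo, hhi⟩ := hθb
  have hcos : cos θb ≠ 0 := (cos_neg_of_pi_div_two_lt_of_lt hlo (by linarith [pi_pos])).ne
  refine ⟨fun t => ⟨?_, by simpa using hasDerivAt_const t θb, hasDerivAt_const t pb, ?_⟩,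
    fun θ p hθ _ => (vortexForce_pos hΓ hθ p).ne'⟩
  · simpa using ((hasDerivAt_id t).mul_const pb).div_const (R ^ 2 * sin θb ^ 2) |>.const_add φ₀
  · rw [vortexForce_div_sq, vortexForce_eq_zero_of_sq_eq hcos hpb, zero_div]
    exact hasDerivAt_const t 0

/-- for a vortex-parallel `{θ = θ̄}` in the vortex half-sphere
(`π/2 < θ̄ < π`), with `p̄² = −(Γ/(8π))·sin⁴θ̄/(2 cos θ̄ (1+cos θ̄))`, the curve
`γ(t) = (φ₀ + t·p̄/(R² sin²θ̄), θ̄, p̄, 0)` solves the Hamiltonian system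
`φ' = p_φ/(R² sin²θ)`, `θ' = p_θ/R²`, `p_φ' = 0`,
`p_θ' = (cos θ/(R² sin³θ))·p_φ² + (Γ/(8π))·sin θ/(2R²(1+cos θ))`; hence every
vortex-parallel in the vortex half-sphere supports a periodic orbit. Conversely, for
`θ̄ ∈ (0,π/2]` no real `p̄ ≠ 0` satisfies
`(cos θ̄/sin³θ̄)·p̄² + (Γ/(8π))·sin θ̄/(2(1+cos θ̄)) = 0`, so no vortex-parallel in the
antivortex half-sphere supports such an orbit. -/
theorem vortex_parallel_periodic_orbits (R Γ θb pb φ₀ : ℝ) (hR : 0 < R) (hΓ : 0 < Γ)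
    (hθb : θb ∈ Set.Ioo (π / 2) π)
    (hpb : pb ^ 2 =
      -(Γ / (8 * π)) * Real.sin θb ^ 4 / (2 * Real.cos θb * (1 + Real.cos θb))) :
    (∀ t : ℝ,
      HasDerivAt (fun s => φ₀ + s * pb / (R ^ 2 * Real.sin θb ^ 2))
        (pb / (R ^ 2 * Real.sin θb ^ 2)) t ∧
      HasDerivAt (fun _ : ℝ => θb) ((0 : ℝ) / R ^ 2) t ∧
      HasDerivAt (fun _ : ℝ => pb) 0 t ∧
      HasDerivAt (fun _ : ℝ => (0 : ℝ))
        (Real.cos θb / (R ^ 2 * Real.sin θb ^ 3) * pb ^ 2 +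
          Γ / (8 * π) * Real.sin θb / (2 * R ^ 2 * (1 + Real.cos θb))) t) ∧
    (∀ θ p : ℝ, θ ∈ Set.Ioc 0 (π / 2) → p ≠ 0 →
      Real.cos θ / Real.sin θ ^ 3 * p ^ 2 +
        Γ / (8 * π) * Real.sin θ / (2 * (1 + Real.cos θ)) ≠ 0) :=
  vortex_parallel_periodic_orbits_general R Γ θb pb φ₀ hΓ hθb hpb
end
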